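/- Pentagon law of cosines: Let x be a positive light-like vector in R³ and y₀, y₁ unit space-like vectors with x∘y₀ < 0, x∘y₁ < 0, y₀∘y₁ < −1. Define v₀ = (−1/(x∘y₀))·x + y₀ and w₀ = (−(y₀∘y₁)·y₀ + y₁)/√((y₀∘y₁)² − 1). Setting cosh ℓ₀ = −w₀∘v₀, e^{a_i} = −x∘y_i, and cosh d = −y₀∘y₁, one has cosh ℓ₀ = (e^{a₀}·cosh d + e^{a₁})/(e^{a₀}·sinh d). -/
import Mathlib

/-- The Lorentzian inner product on `ℝ³`. -/
def lprod (x y : Fin 3 → ℝ) : ℝ := -(x 0 * y 0) + x 1 * y 1 + x 2 * y 2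

lemma lprod_comm (u v : Fin 3 → ℝ) : lprod u v = lprod v u := by
  simp [lprod]; ring

lemma lprod_smul_left (a : ℝ) (u v : Fin 3 → ℝ) :
    lprod (a • u) v = a * lprod u v := by
  simp [lprod, Pi.smul_apply, smul_eq_mul]; ring

lemma lprod_expand (a b : ℝ) (u v w z : Fin 3 → ℝ) :
    lprod (a • u + v) (b • w + z) =
      a * b * lprod u w + a * lprod u z + b * lprod v w + lprod v z := by
  simp [lprod, Pi.add_apply, Pi.smul_apply, smul_eq_mul]; ring

/-- Law of cosines for a convex pentagon with four right angles and one ideal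
vertex: `cosh ℓ₀ = (e^{a₀} cosh d + e^{a₁})/(e^{a₀} sinh d)`. -/
theorem pentagon_law_of_cosines {x y₀ y₁ : Fin 3 → ℝ}
    (hx : lprod x x = 0) (hxpos : 0 < x 0)
    (hy₀ : lprod y₀ y₀ = 1) (hy₁ : lprod y₁ y₁ = 1)
    (hxy₀ : lprod x y₀ < 0) (hxy₁ : lprod x y₁ < 0)
    (hyy : lprod y₀ y₁ < -1)
    (v₀ w₀ : Fin 3 → ℝ)
    (hv₀ : v₀ = (-1 / lprod x y₀) • x + y₀)
    (hw₀ : w₀ = (1 / Real.sqrt ((lprod y₀ y₁) ^ 2 - 1)) •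
      ((-(lprod y₀ y₁)) • y₀ + y₁))
    (ℓ₀ a₀ a₁ d : ℝ)
    (hℓ₀ : Real.cosh ℓ₀ = -lprod w₀ v₀)
    (ha₀ : Real.exp a₀ = -lprod x y₀) (ha₁ : Real.exp a₁ = -lprod x y₁)
    (hd : Real.cosh d = -lprod y₀ y₁) (hdpos : 0 ≤ d) :
    Real.cosh ℓ₀ = (Real.exp a₀ * Real.cosh d + Real.exp a₁) /
      (Real.exp a₀ * Real.sinh d) := by
  set c := lprod y₀ y₁ with hc
  set p := lprod x y₀ with hp
  set q := lprod x y₁ with hq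
  have hc2 : (0:ℝ) < c ^ 2 - 1 := by nlinarith
  set s := Real.sqrt (c ^ 2 - 1) with hs
  have hspos : 0 < s := Real.sqrt_pos.mpr hc2
  have hs2 : s ^ 2 = c ^ 2 - 1 := Real.sq_sqrt hc2.le
  have hsinh : Real.sinh d = s := by
    have h1 : Real.sinh d ^ 2 = c ^ 2 - 1 := by
      have := Real.cosh_sq d
      rw [hd] at this; nlinarith
    have h2 : 0 ≤ Real.sinh d := by rwa [Real.sinh_nonneg_iff]
    rw [hs, ← h1, Real.sqrt_sq h2]
  have hwv : lprod w₀ v₀ = (1 / s) *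
      ((-c) * (-1 / p) * p + (-c) * 1 + (-1 / p) * q + c) := by
    rw [hw₀, hv₀, lprod_smul_left, lprod_expand, hy₀, lprod_comm y₀ x,
      lprod_comm y₁ x, lprod_comm y₁ y₀, ← hp, ← hq]
  have hpne : p ≠ 0 := ne_of_lt hxy₀
  rw [hℓ₀, hwv, ha₀, ha₁, hd, hsinh]
  field_simp
  ring
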